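/- On the Lie algebra ℝ × h₇ with structure equations as above, for the complex structure I_t (t ∈ (0,1), t ≠ 1/2) defined by I_t(e¹) = ((t-1)/t)e², I_t(e³) = e⁴, I_t(e⁵) = (1/t)e⁶, I_t(e⁷) = e⁸ (extended so I_t² = -Id), the (0,2)-component of d(e⁷ - i e⁸) with respect to I_t equals ((2t-1)/(2t-2)) (e¹ - i((t-1)/t) e⁴) ∧ (e³ - i e⁴) restricted to (0,2)-type, and in particular is nonzero for t ≠ 1/2 and zero for t = 1/2. -/

import Mathlib

/-- The coordinate functionals `e¹, …, e⁸` (complexified). -/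
noncomputable def e17 (i : Fin 8) : (Fin 8 → ℂ) → ℂ := fun v => v i

/-- Wedge product of two 1-forms, as a bilinear alternating 2-form. -/
noncomputable def wedge17 (a b : (Fin 8 → ℂ) → ℂ) : (Fin 8 → ℂ) → (Fin 8 → ℂ) → ℂ :=
  fun x y => a x * b y - a y * b x

/-- The complex structure `I_t` (`I_t e¹ = ((t-1)/t) e²`, `I_t e³ = e⁴`,
`I_t e⁵ = (1/t) e⁶`, `I_t e⁷ = e⁸`, extended with `I_t² = -Id`), transported to
the complexified vector space by duality. -/
noncomputable def Ivec17 (t : ℝ) (v : Fin 8 → ℂ) : Fin 8 → ℂ := fun i =>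
  if i = 0 then -(((t - 1) / t : ℝ) : ℂ) * v 1
  else if i = 1 then ((t / (t - 1) : ℝ) : ℂ) * v 0
  else if i = 2 then -v 3
  else if i = 3 then v 2
  else if i = 4 then -((1 / t : ℝ) : ℂ) * v 5
  else if i = 5 then (t : ℂ) * v 4
  else if i = 6 then -v 7
  else v 6

/-!
A `(0,1)`-vector `x` of `I_t` satisfies `x₀ = -i c x₁` and `x₃ = i x₂` with `c = (t-1)/t`.
Substituting, both `d(e⁷ - i e⁸)` and `(e¹ - i c e²) ∧ (e³ - i e⁴)` become multiples of
`x₁ y₂ - y₁ x₂`, with factors `-2i(c+1)` and `-4ic`; their ratio is `(2t-1)/(2t-2)` since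
`c + 1 = (2t-1)/t`, which vanishes exactly at `t = 1/2`.
-/

open Complex

section Coordinates

variable {x y : Fin 8 → ℂ} (c : ℂ)

lemma coords_of_Ivec17_eq_neg_I_smul {t : ℝ} (hx : Ivec17 t x = -I • x) :
    x 0 = -I * (((t - 1) / t : ℝ) : ℂ) * x 1 ∧ x 3 = I * x 2 := by
  have h0 := congrFun hx 0
  have h2 := congrFun hx 2
  simp only [Ivec17, Pi.smul_apply, smul_eq_mul, Fin.isValue, Fin.reduceEq, ↓reduceIte, neg_mul,
    neg_inj] at h0 h2
  constructor
  · linear_combination I * h0 + x 0 * I_sq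
  · linear_combination h2

lemma dForm_apply_of_coords (hx : x 0 = -I * c * x 1 ∧ x 3 = I * x 2)
    (hy : y 0 = -I * c * y 1 ∧ y 3 = I * y 2) :
    (wedge17 (e17 0) (e17 2) x y - wedge17 (e17 1) (e17 3) x y)
        - I * (wedge17 (e17 0) (e17 3) x y + wedge17 (e17 1) (e17 2) x y) =
      -2 * I * (c + 1) * (x 1 * y 2 - y 1 * x 2) := by
  simp only [wedge17, e17, hx.1, hx.2, hy.1, hy.2]
  linear_combination I * c * (x 1 * y 2 - y 1 * x 2) * I_sq

lemma wedge_apply_of_coords (hx : x 0 = -I * c * x 1 ∧ x 3 = I * x 2)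
    (hy : y 0 = -I * c * y 1 ∧ y 3 = I * y 2) :
    wedge17 (fun v => e17 0 v - I * c * e17 1 v) (fun v => e17 2 v - I * e17 3 v) x y =
      -4 * I * c * (x 1 * y 2 - y 1 * x 2) := by
  simp only [wedge17, e17, hx.1, hx.2, hy.1, hy.2]
  linear_combination 2 * I * c * (x 1 * y 2 - y 1 * x 2) * I_sq

end Coordinates

lemma exists_Ivec17_eq_neg_I_smul_pair {t : ℝ} (ht0 : (t : ℂ) ≠ 0) (ht1 : (t : ℂ) - 1 ≠ 0) :
    ∃ x y : Fin 8 → ℂ, Ivec17 t x = -I • x ∧ Ivec17 t y = -I • y ∧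
      x 1 * y 2 - y 1 * x 2 = 1 := by
  refine ⟨![-I * (((t - 1) / t : ℝ) : ℂ), 1, 0, 0, 0, 0, 0, 0], ![0, 0, 1, I, 0, 0, 0, 0],
    ?_, ?_, by simp⟩ <;> funext i <;> fin_cases i <;> simp [Ivec17]
  · field_simp; simp
  · field_simp

/-- On `ℝ × h₇`, the `(0,2)`-component of `d(e⁷ - i e⁸) = (e¹∧e³ - e²∧e⁴)
- i(e¹∧e⁴ + e²∧e³)` with respect to `I_t` — i.e. its restriction to pairs of
`(0,1)`-vectors — equals `((2t-1)/(2t-2)) (e¹ - i((t-1)/t) e²) ∧ (e³ - i e⁴)`;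
in particular it is nonzero for `t ≠ 1/2` and zero for `t = 1/2`. -/
theorem stmt17 (t : ℝ) (ht0 : 0 < t) (ht1 : t < 1) :
    (∀ x y : Fin 8 → ℂ,
      Ivec17 t x = -Complex.I • x → Ivec17 t y = -Complex.I • y →
      (wedge17 (e17 0) (e17 2) x y - wedge17 (e17 1) (e17 3) x y)
          - Complex.I * (wedge17 (e17 0) (e17 3) x y + wedge17 (e17 1) (e17 2) x y) =
        ((((2 * t - 1) : ℝ) : ℂ) / (((2 * t - 2) : ℝ) : ℂ)) *
          wedge17 (fun v => e17 0 v - Complex.I * (((t - 1) / t : ℝ) : ℂ) * e17 1 v)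
            (fun v => e17 2 v - Complex.I * e17 3 v) x y) ∧
    (t ≠ 1 / 2 → ∃ x y : Fin 8 → ℂ,
      Ivec17 t x = -Complex.I • x ∧ Ivec17 t y = -Complex.I • y ∧
      (wedge17 (e17 0) (e17 2) x y - wedge17 (e17 1) (e17 3) x y)
          - Complex.I * (wedge17 (e17 0) (e17 3) x y + wedge17 (e17 1) (e17 2) x y) ≠ 0) ∧
    (t = 1 / 2 → ∀ x y : Fin 8 → ℂ,
      Ivec17 t x = -Complex.I • x → Ivec17 t y = -Complex.I • y →
      (wedge17 (e17 0) (e17 2) x y - wedge17 (e17 1) (e17 3) x y)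
          - Complex.I * (wedge17 (e17 0) (e17 3) x y + wedge17 (e17 1) (e17 2) x y) = 0) := by
  have ht0' : (t : ℂ) ≠ 0 := by exact_mod_cast ht0.ne'
  have ht1' : (t : ℂ) - 1 ≠ 0 := by exact_mod_cast (by linarith : t - 1 ≠ 0)
  have hc : (((t - 1) / t : ℝ) : ℂ) + 1 = (((2 * t - 1) / t : ℝ) : ℂ) := by
    push_cast; field_simp; ring
  refine ⟨fun x y hx hy => ?_, fun h12 => ?_, fun h12 x y hx hy => ?_⟩
  · have hx' := coords_of_Ivec17_eq_neg_I_smul hx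
    have hy' := coords_of_Ivec17_eq_neg_I_smul hy
    rw [dForm_apply_of_coords _ hx' hy', wedge_apply_of_coords _ hx' hy', hc]
    push_cast
    field_simp
    ring
  · obtain ⟨x, y, hx, hy, hD⟩ := exists_Ivec17_eq_neg_I_smul_pair ht0' ht1'
    refine ⟨x, y, hx, hy, ?_⟩
    rw [dForm_apply_of_coords _ (coords_of_Ivec17_eq_neg_I_smul hx)
      (coords_of_Ivec17_eq_neg_I_smul hy), hD, hc]
    have h2t : (2 * t - 1 : ℂ) ≠ 0 := by exact_mod_cast (by contrapose! h12; linarith : 2 * t - 1 ≠ 0)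
    simp [I_ne_zero, h2t, ht0']
  · rw [dForm_apply_of_coords _ (coords_of_Ivec17_eq_neg_I_smul hx)
      (coords_of_Ivec17_eq_neg_I_smul hy), hc, h12]
    norm_num
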